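/- arXiv:1406.3738 — 2 statements merged into one kernel-verified Lean document; each statement's English description precedes it below -/
import Mathlib

section
/- With V and e : V → X♯ as above, the kernel of e is isomorphic to Y♯/nY, via the map sending y♯ ∈ Y♯ to the class of (δ(y♯), −y♯) in V. In particular there is a short exact sequence 0 → Y♯/nY → V → X♯ → 0. -/
/- Setup: `Y` is a finitely generated free ℤ-module (a free abelian group of
finite rank), `Q : Y → ℤ` a quadratic form with polarization
`B y₁ y₂ = Q (y₁+y₂) - Q y₁ - Q y₂` (given as a bundled bilinear map), `n` a
positive integer, and `β = B / n` the associated `(1/n)ℤ`-valued form. -/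

variable {Y : Type} [AddCommGroup Y]

/-- `Y♯ = {y ∈ Y : β(y, y') ∈ ℤ for all y' ∈ Y}`, where `β = B/n`. -/
def Ysharp (B : Y →+ Y →+ ℤ) (n : ℕ) : AddSubgroup Y where
  carrier := {y | ∀ y' : Y, (n : ℤ) ∣ B y y'}
  zero_mem' := by intro y'; simp
  add_mem' := by
    intro a b ha hb y'
    rw [map_add, AddMonoidHom.add_apply]
    exact dvd_add (ha y') (hb y')
  neg_mem' := by
    intro a ha y'
    rw [map_neg, AddMonoidHom.neg_apply]
    exact dvd_neg.mpr (ha y')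

/-- `X = Hom(Y, ℤ)` viewed inside `Hom(Y, ℚ)`: the integer-valued homomorphisms. -/
def Xgrp (Y : Type) [AddCommGroup Y] : AddSubgroup (Y →+ ℚ) where
  carrier := {f | ∀ y : Y, ∃ k : ℤ, f y = (k : ℚ)}
  zero_mem' := by intro y; exact ⟨0, by simp⟩
  add_mem' := by
    intro f g hf hg y
    obtain ⟨a, ha⟩ := hf y
    obtain ⟨b, hb⟩ := hg y
    exact ⟨a + b, by simp [ha, hb]⟩
  neg_mem' := by
    intro f hf y
    obtain ⟨a, ha⟩ := hf y
    exact ⟨-a, by simp [ha]⟩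

/-- `δ : Y → Hom(Y, ℚ)`, `δ(y) = β(y, ·) = B(y, ·)/n`. -/
def delta (B : Y →+ Y →+ ℤ) (n : ℕ) : Y →+ (Y →+ ℚ) where
  toFun y := ((n : ℚ)⁻¹) • ((Int.castAddHom ℚ).comp (B y))
  map_zero' := by ext y'; simp
  map_add' a b := by
    ext y'
    simp [map_add, smul_eq_mul]
    ring

/-- `X♯ = {x ∈ (1/n)X : ⟨x, y⟩ ∈ ℤ for all y ∈ Y♯}` inside `Hom(Y, ℚ)`. -/
def Xsharp (B : Y →+ Y →+ ℤ) (n : ℕ) : AddSubgroup (Y →+ ℚ) where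
  carrier := {f | (∀ y : Y, ∃ k : ℤ, (n : ℚ) * f y = (k : ℚ)) ∧
      ∀ y ∈ Ysharp B n, ∃ k : ℤ, f y = (k : ℚ)}
  zero_mem' := ⟨fun y => ⟨0, by simp⟩, fun y _ => ⟨0, by simp⟩⟩
  add_mem' := by
    rintro f g ⟨hf1, hf2⟩ ⟨hg1, hg2⟩
    constructor
    · intro y
      obtain ⟨a, ha⟩ := hf1 y
      obtain ⟨b, hb⟩ := hg1 y
      exact ⟨a + b, by push_cast [AddMonoidHom.add_apply, mul_add, ha, hb]; ring⟩
    · intro y hy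
      obtain ⟨a, ha⟩ := hf2 y hy
      obtain ⟨b, hb⟩ := hg2 y hy
      exact ⟨a + b, by simp [ha, hb]⟩
  neg_mem' := by
    rintro f ⟨hf1, hf2⟩
    constructor
    · intro y
      obtain ⟨a, ha⟩ := hf1 y
      exact ⟨-a, by push_cast [AddMonoidHom.neg_apply, mul_neg, ha]; ring⟩
    · intro y hy
      obtain ⟨a, ha⟩ := hf2 y hy
      exact ⟨-a, by simp [ha]⟩

/-- The homomorphism `y ↦ (nδ(y), -ny) = (B(y,·), -ny)`; its range is the
subgroup of relations defining `V = (X ⊕ Y)/⟨(nδ(y), -ny) : y ∈ Y⟩`. -/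
def relHom (B : Y →+ Y →+ ℤ) (n : ℕ) : Y →+ (Y →+ ℤ) × Y :=
  AddMonoidHom.prod B (-(n • AddMonoidHom.id Y))

/-- The subgroup generated by the pairs `(nδ(y), -ny)` for `y ∈ Y`. -/
def Wgrp (B : Y →+ Y →+ ℤ) (n : ℕ) : AddSubgroup ((Y →+ ℤ) × Y) :=
  (relHom B n).range

/-- The inclusion `X = Hom(Y,ℤ) → Hom(Y,ℚ)`. -/
def castComp (Y : Type) [AddCommGroup Y] : (Y →+ ℤ) →+ (Y →+ ℚ) where
  toFun x := (Int.castAddHom ℚ).comp x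
  map_zero' := by ext y; simp
  map_add' a b := by ext y; simp

/-- `e : X ⊕ Y → Hom(Y,ℚ)`, `e(x, y) = x + δ(y)`. -/
def eMap (B : Y →+ Y →+ ℤ) (n : ℕ) : ((Y →+ ℤ) × Y) →+ (Y →+ ℚ) :=
  (castComp Y).comp (AddMonoidHom.fst (Y →+ ℤ) Y) +
    (delta B n).comp (AddMonoidHom.snd (Y →+ ℤ) Y)

/-- The induced map `e : V → Hom(Y,ℚ)` on `V = (X ⊕ Y)/⟨(nδ(y), -ny)⟩`. -/
def ebar (B : Y →+ Y →+ ℤ) (n : ℕ) (hn : 0 < n) :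
    (((Y →+ ℤ) × Y) ⧸ Wgrp B n) →+ (Y →+ ℚ) :=
  QuotientAddGroup.lift (Wgrp B n) (eMap B n) (by
    rintro p ⟨y, rfl⟩
    ext y'
    have hn0 : (n : ℚ) ≠ 0 := Nat.cast_ne_zero.mpr hn.ne'
    simp [eMap, relHom, castComp, delta, smul_eq_mul]
    field_simp
    ring)

/-! A class `[(x, y)] ∈ V` lies in `ker e` exactly when `x = δ(-y)`. Since `x` is integral,
`B(-y, ·) = n x` is divisible by `n`, i.e. `-y ∈ Y♯`, so every element of the kernel has the form
`[(δ(y♯), -y♯)]`. Such a class vanishes iff `(δ(y♯), -y♯)` is a relation `(B(z, ·), -n z)`; the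
second coordinate forces `y♯ = n z`, and then the first holds automatically because
`n δ(y♯) = B(n z, ·) = n B(z, ·)` and `Hom(Y, ℤ)` is torsion-free. -/

section KernelOfE

variable {B : Y →+ Y →+ ℤ} {n : ℕ}

@[simp]
lemma delta_apply (y y' : Y) : delta B n y y' = (B y y' : ℚ) / n := by
  simp [delta, div_eq_inv_mul]

lemma eMap_apply (p : (Y →+ ℤ) × Y) (y' : Y) :
    eMap B n p y' = p.1 y' + delta B n p.2 y' := rfl

lemma ebar_mk (hn : 0 < n) (p : (Y →+ ℤ) × Y) :
    ebar B n hn (QuotientAddGroup.mk p) = eMap B n p := rfl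

lemma mk_mem_ker_ebar_iff (hn : 0 < n) (x : Y →+ ℤ) (y : Y) :
    (QuotientAddGroup.mk (x, y) : ((Y →+ ℤ) × Y) ⧸ Wgrp B n) ∈ (ebar B n hn).ker ↔
      ∀ y', (x y' : ℚ) = delta B n (-y) y' := by
  rw [AddMonoidHom.mem_ker, ebar_mk, DFunLike.ext_iff]
  simp only [eMap_apply, map_neg, AddMonoidHom.neg_apply, AddMonoidHom.zero_apply,
    add_eq_zero_iff_eq_neg]

lemma mk_eq_zero_iff (x : Y →+ ℤ) (y : Y) :
    (QuotientAddGroup.mk (x, y) : ((Y →+ ℤ) × Y) ⧸ Wgrp B n) = 0 ↔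
      ∃ z, B z = x ∧ -(n • z) = y := by
  rw [QuotientAddGroup.eq_zero_iff]
  simp [Wgrp, relHom, Prod.ext_iff]

lemma eq_nsmul_of_cast_eq_delta (hn : n ≠ 0) {x : Y →+ ℤ} {y : Y}
    (hx : ∀ y', (x y' : ℚ) = delta B n y y') : B y = n • x := by
  ext y'
  have h := hx y'
  rw [delta_apply, eq_div_iff (Nat.cast_ne_zero.mpr hn)] at h
  simp only [AddMonoidHom.nsmul_apply, nsmul_eq_mul]
  rw [mul_comm]
  exact_mod_cast h.symm

lemma mem_Ysharp_of_cast_eq_delta (hn : n ≠ 0) {x : Y →+ ℤ} {y : Y}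
    (hx : ∀ y', (x y' : ℚ) = delta B n y y') : y ∈ Ysharp B n := fun y' =>
  ⟨x y', by rw [eq_nsmul_of_cast_eq_delta hn hx]; simp⟩

lemma mk_neg_eq_zero_iff_of_cast_eq_delta (hn : n ≠ 0) {x : Y →+ ℤ} {y : Y}
    (hx : ∀ y', (x y' : ℚ) = delta B n y y') :
    (QuotientAddGroup.mk (x, -y) : ((Y →+ ℤ) × Y) ⧸ Wgrp B n) = 0 ↔ ∃ z : Y, y = n • z := by
  simp only [mk_eq_zero_iff, neg_inj]
  refine ⟨fun ⟨z, _, hz⟩ => ⟨z, hz.symm⟩, fun ⟨z, hz⟩ => ⟨z, ?_, hz.symm⟩⟩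
  have hnB : n • B z = n • x := by
    rw [← map_nsmul, ← hz, eq_nsmul_of_cast_eq_delta hn hx]
  exact AddMonoidHom.ext fun y' => nsmul_right_injective hn (DFunLike.congr_fun hnB y')

end KernelOfE

theorem covers_of_tori_stmt7_general
    (B : Y →+ Y →+ ℤ)
    (n : ℕ) (hn : 0 < n) :
    (∀ y ∈ Ysharp B n, ∀ x : Y →+ ℤ,
      (∀ y' : Y, ((x y' : ℤ) : ℚ) = delta B n y y') →
        (QuotientAddGroup.mk (x, -y) : ((Y →+ ℤ) × Y) ⧸ Wgrp B n) ∈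
          (ebar B n hn).ker) ∧
    (∀ v ∈ (ebar B n hn).ker, ∃ y ∈ Ysharp B n, ∃ x : Y →+ ℤ,
      (∀ y' : Y, ((x y' : ℤ) : ℚ) = delta B n y y') ∧
        (QuotientAddGroup.mk (x, -y) : ((Y →+ ℤ) × Y) ⧸ Wgrp B n) = v) ∧
    (∀ y ∈ Ysharp B n, ∀ x : Y →+ ℤ,
      (∀ y' : Y, ((x y' : ℤ) : ℚ) = delta B n y y') →
        ((QuotientAddGroup.mk (x, -y) : ((Y →+ ℤ) × Y) ⧸ Wgrp B n) = 0 ↔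
          ∃ z : Y, y = n • z)) := by
  refine ⟨fun y _ x hx => ?_, fun v hv => ?_, fun y _ x hx => ?_⟩
  · rwa [mk_mem_ker_ebar_iff, neg_neg]
  · obtain ⟨⟨x, y⟩, rfl⟩ := QuotientAddGroup.mk_surjective v
    rw [mk_mem_ker_ebar_iff] at hv
    exact ⟨-y, mem_Ysharp_of_cast_eq_delta hn.ne' hv, x, hv, by rw [neg_neg]⟩
  · exact mk_neg_eq_zero_iff_of_cast_eq_delta hn.ne' hx

/-- the kernel of `e : V → X♯` is isomorphic to `Y♯/nY`, via
`y♯ ↦ [(δ(y♯), -y♯)]`.  Concretely: for `y ∈ Y♯` and `x ∈ X = Hom(Y,ℤ)`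
representing `δ(y)`, the class of `(x, -y)` lies in `ker e`; every element of
`ker e` is of this form; and the class of `(x, -y)` vanishes in `V` iff
`y ∈ nY`.  In particular `0 → Y♯/nY → V → X♯ → 0` is exact. -/
theorem covers_of_tori_stmt7 [Module.Free ℤ Y] [Module.Finite ℤ Y]
    (Q : Y → ℤ) (B : Y →+ Y →+ ℤ)
    (hQB : ∀ y₁ y₂ : Y, B y₁ y₂ = Q (y₁ + y₂) - Q y₁ - Q y₂)
    (hQ : ∀ (m : ℤ) (y : Y), Q (m • y) = m ^ 2 * Q y)
    (n : ℕ) (hn : 0 < n) :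
    (∀ y ∈ Ysharp B n, ∀ x : Y →+ ℤ,
      (∀ y' : Y, ((x y' : ℤ) : ℚ) = delta B n y y') →
        (QuotientAddGroup.mk (x, -y) : ((Y →+ ℤ) × Y) ⧸ Wgrp B n) ∈
          (ebar B n hn).ker) ∧
    (∀ v ∈ (ebar B n hn).ker, ∃ y ∈ Ysharp B n, ∃ x : Y →+ ℤ,
      (∀ y' : Y, ((x y' : ℤ) : ℚ) = delta B n y y') ∧
        (QuotientAddGroup.mk (x, -y) : ((Y →+ ℤ) × Y) ⧸ Wgrp B n) = v) ∧
    (∀ y ∈ Ysharp B n, ∀ x : Y →+ ℤ,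
      (∀ y' : Y, ((x y' : ℤ) : ℚ) = delta B n y y') →
        ((QuotientAddGroup.mk (x, -y) : ((Y →+ ℤ) × Y) ⧸ Wgrp B n) = 0 ↔
          ∃ z : Y, y = n • z)) :=
  covers_of_tori_stmt7_general B n hn
end

section
/- Let G be a finite group with [G,G] ⊆ Z = Z(G), χ : Z → ℂˣ injective on [G,G], and π the irreducible representation of G with central character χ. Then the character of π satisfies: Tr π(g) = √[G:Z] · χ(g) if g ∈ Z, and Tr π(g) = 0 if g ∉ Z. -/
open Module
open scoped commutatorElement

/-!
If `g ∉ Z`, pick `h` with `c = ⁅h, g⁆ ≠ 1`. Then `h g h⁻¹ = c g`, and `c` is central and acts by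
the scalar `χ c ≠ 1`, so conjugation invariance of the trace gives `Tr π(g) = χ c · Tr π(g)`,
i.e. `Tr π(g) = 0`. On `Z` the representation acts by the scalars `χ`, so
`∑_g Tr π(g) Tr π(g⁻¹) = |Z| (dim π)²`; by Schur orthogonality this sum is `|G| = |Z| [G : Z]`.
-/

namespace Representation

section Monoid

variable {G k V : Type*} [Monoid G] [Field k] [AddCommGroup V] [Module k V]
  {ρ : Representation k G V}

theorem isIrreducible_of_forall_submodule [Nontrivial V]
    (h : ∀ U : Submodule k V, (∀ g : G, ∀ v ∈ U, ρ g v ∈ U) → U = ⊥ ∨ U = ⊤) :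
    IsIrreducible ρ where
  exists_pair_ne := ⟨⊥, ⊤, fun e => bot_ne_top (congrArg Subrepresentation.toSubmodule e)⟩
  eq_bot_or_eq_top W :=
    (h W.toSubmodule W.apply_mem_toSubmodule).imp Subrepresentation.ext Subrepresentation.ext

variable (ρ) in
def orbitSpan (v : V) : Subrepresentation ρ where
  toSubmodule := Submodule.span k (Set.range fun g => ρ g v)
  apply_mem_toSubmodule g w hw := by
    have hle : (Submodule.span k (Set.range fun g => ρ g v)).map (ρ g) ≤
        Submodule.span k (Set.range fun g => ρ g v) := by
      rw [Submodule.map_span]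
      refine Submodule.span_mono ?_
      rintro _ ⟨_, ⟨h, rfl⟩, rfl⟩
      exact ⟨g * h, by simp⟩
    exact hle ⟨w, hw, rfl⟩

theorem finiteDimensional_of_isIrreducible [Finite G] [IsIrreducible ρ] :
    FiniteDimensional k V := by
  cases subsingleton_or_nontrivial V
  · exact Module.Finite.of_finite
  obtain ⟨v, hv⟩ := exists_ne (0 : V)
  have hspan : Submodule.span k (Set.range fun g => ρ g v) = ⊤ := by
    refine congrArg Subrepresentation.toSubmodule
      ((eq_bot_or_eq_top (orbitSpan ρ v)).resolve_left fun hbot => hv ?_)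
    have hmem : v ∈ (orbitSpan ρ v).toSubmodule := Submodule.subset_span ⟨1, by simp⟩
    rwa [hbot] at hmem
  exact ⟨hspan ▸ Submodule.fg_span (Set.finite_range _)⟩

theorem character_eq_finrank_mul_of_apply_eq_smul [FiniteDimensional k V] {g : G} {c : k}
    (h : ∀ v, ρ g v = c • v) :
    ρ.character g = finrank k V * c := by
  rw [character, (LinearMap.ext h : ρ g = c • LinearMap.id), map_smul, LinearMap.trace_id,
    smul_eq_mul, mul_comm]

end Monoid

section Group

variable {G k V : Type*} [Group G] [Field k] [AddCommGroup V] [Module k V]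
  {ρ : Representation k G V}

theorem character_eq_zero_of_conj_apply_eq_smul {g h : G} {c : k} (hc : c ≠ 1)
    (hconj : ∀ v, ρ (h * g * h⁻¹) v = c • ρ g v) : ρ.character g = 0 := by
  have hfix : ρ.character g = c * ρ.character g := calc
    ρ.character g = ρ.character (h * g * h⁻¹) := (char_conj ρ g h).symm
    _ = c * ρ.character g := by
      rw [character, (LinearMap.ext hconj : ρ (h * g * h⁻¹) = c • ρ g), map_smul, smul_eq_mul]
      rfl
  have : (c - 1) * ρ.character g = 0 := by linear_combination -hfix
  exact (mul_eq_zero.mp this).resolve_left (sub_ne_zero.mpr hc)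

theorem sum_character_mul_character_inv_eq_card [Fintype G] [IsAlgClosed k]
    [Invertible (Nat.card G : k)] [FiniteDimensional k V] [IsIrreducible ρ] :
    ∑ g : G, ρ.character g * ρ.character g⁻¹ = Nat.card G := by
  have h := char_orthonormal ρ ρ
  rw [if_pos ⟨Equiv.refl ρ⟩, inv_mul_eq_one₀ (Invertible.ne_zero _)] at h
  exact h.symm

theorem sum_character_mul_character_inv_of_apply_eq_smul [Fintype G] [FiniteDimensional k V]
    {H : Subgroup G} (χ : H →* kˣ) (hχ : ∀ (z : H) (v : V), ρ z v = (χ z : k) • v)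
    (hvanish : ∀ g ∉ H, ρ.character g = 0) :
    ∑ g : G, ρ.character g * ρ.character g⁻¹ = Nat.card H * (finrank k V * finrank k V) := by
  classical
  have hsupp : ∀ g ∉ H, ρ.character g * ρ.character g⁻¹ = 0 := fun g hg => by
    rw [hvanish g hg, zero_mul]
  have hscalar : ∀ z : H, ρ.character z * ρ.character (z : G)⁻¹ = finrank k V * finrank k V := by
    intro z
    rw [← Subgroup.coe_inv, character_eq_finrank_mul_of_apply_eq_smul (hχ z),
      character_eq_finrank_mul_of_apply_eq_smul (hχ z⁻¹), map_inv, Units.val_inv_eq_inv_val]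
    field_simp
  rw [← Finset.sum_filter_of_ne fun g _ => not_imp_comm.mp (hsupp g),
    Finset.sum_subtype (p := (· ∈ H)) (F := inferInstance) _ (fun g => by simp)]
  simp only [hscalar, Finset.sum_const, Finset.card_univ, nsmul_eq_mul, ← Nat.card_eq_fintype_card]

theorem character_eq_zero_of_notMem_center (hGZ : ∀ g h : G, ⁅g, h⁆ ∈ Subgroup.center G)
    (χ : Subgroup.center G →* kˣ)
    (hχinj : ∀ z : Subgroup.center G, (z : G) ∈ commutator G → χ z = 1 → (z : G) = 1)
    (hχ : ∀ (z : Subgroup.center G) (v : V), ρ (z : G) v = (χ z : k) • v)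
    {g : G} (hg : g ∉ Subgroup.center G) : ρ.character g = 0 := by
  obtain ⟨h, hhg⟩ : ∃ h, h * g ≠ g * h := by simpa [Subgroup.mem_center_iff] using hg
  let z : Subgroup.center G := ⟨⁅h, g⁆, hGZ h g⟩
  have hz : χ z ≠ 1 := fun h1 => hhg <| commutatorElement_eq_one_iff_mul_comm.mp <|
    hχinj z (Subgroup.commutator_mem_commutator (Subgroup.mem_top h) (Subgroup.mem_top g)) h1
  refine character_eq_zero_of_conj_apply_eq_smul (h := h) (c := χ z)
    (Units.val_eq_one.not.mpr hz) fun v => ?_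
  rw [show h * g * h⁻¹ = ⁅h, g⁆ * g by group, map_mul, Module.End.mul_apply]
  exact hχ z _

end Group

end Representation

open Representation

/-- let `G` be a finite group with `[G,G] ⊆ Z = Z(G)`,
`χ : Z → ℂˣ` injective on `[G,G]`, and `π = (ρ, V)` the irreducible
representation of `G` with central character `χ`.  Then
`Tr π(g) = √[G:Z] · χ(g)` for `g ∈ Z` (the dimension of `π` being `√[G:Z]`),
and `Tr π(g) = 0` for `g ∉ Z`. -/
theorem covers_of_tori_stmt12 (G : Type) [Group G] [Finite G]
    (hGZ : ∀ g h : G, ⁅g, h⁆ ∈ Subgroup.center G)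
    (χ : Subgroup.center G →* ℂˣ)
    (hχinj : ∀ z : Subgroup.center G,
      (z : G) ∈ commutator G → χ z = 1 → (z : G) = 1)
    (V : Type) [AddCommGroup V] [Module ℂ V] [Nontrivial V]
    (ρ : Representation ℂ G V)
    (hirr : ∀ U : Submodule ℂ V, (∀ g : G, ∀ v ∈ U, ρ g v ∈ U) →
      U = ⊥ ∨ U = ⊤)
    (hχ : ∀ (z : Subgroup.center G) (v : V), ρ (z : G) v = (χ z : ℂ) • v) :
    finrank ℂ V * finrank ℂ V = (Subgroup.center G).index ∧
    (∀ (g : G) (hg : g ∈ Subgroup.center G),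
      LinearMap.trace ℂ V (ρ g) = (finrank ℂ V : ℂ) * (χ ⟨g, hg⟩ : ℂ)) ∧
    (∀ g : G, g ∉ Subgroup.center G → LinearMap.trace ℂ V (ρ g) = 0) := by
  have := Fintype.ofFinite G
  have := isIrreducible_of_forall_submodule hirr
  have := finiteDimensional_of_isIrreducible (ρ := ρ)
  have := invertibleOfNonzero (Nat.cast_ne_zero.mpr Nat.card_pos.ne' : (Nat.card G : ℂ) ≠ 0)
  have hoff := fun g => character_eq_zero_of_notMem_center (ρ := ρ) hGZ χ hχinj hχ (g := g)
  refine ⟨?_, fun g hg => character_eq_finrank_mul_of_apply_eq_smul (hχ ⟨g, hg⟩), hoff⟩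
  have hcard : Nat.card (Subgroup.center G) * (finrank ℂ V * finrank ℂ V) = Nat.card G := by
    exact_mod_cast (sum_character_mul_character_inv_of_apply_eq_smul χ hχ hoff).symm.trans
      sum_character_mul_character_inv_eq_card
  rw [← Subgroup.card_mul_index (Subgroup.center G)] at hcard
  exact Nat.eq_of_mul_eq_mul_left Nat.card_pos hcard
end
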